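/- arXiv:1709.06068 — 3 statements merged into one kernel-verified Lean document; each statement's English description precedes it below -/
import Mathlib

section
/- Let S be a nondegenerate simplex in R^n contained in Q_n = [0,1]^n with Q_n ⊄ S. Then ξ(S) = (n+1)·max_{1≤k≤n+1} max_{v ∈ ver(Q_n)} (−λ_k(v)) + 1, where λ_k are the basic Lagrange polynomials of S and ver(Q_n) = {0,1}^n. -/
open Finset MeasureTheory

/-- The unit cube `[0,1]^n` in `ℝ^n`. -/
def unitCube (n : ℕ) : Set (Fin n → ℝ) := {x | ∀ i, 0 ≤ x i ∧ x i ≤ 1}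

/-- The set of vertices of the unit cube, i.e. `{0,1}^n`. -/
def cubeVerts (n : ℕ) : Set (Fin n → ℝ) := {x | ∀ i, x i = 0 ∨ x i = 1}

/-- The (solid) simplex spanned by `n+1` points. -/
def simplexSet {n : ℕ} (v : Fin (n + 1) → (Fin n → ℝ)) : Set (Fin n → ℝ) :=
  convexHull ℝ (Set.range v)

/-- The centroid (center of gravity) of the simplex with vertices `v`. -/
noncomputable def simplexCentroid {n : ℕ} (v : Fin (n + 1) → (Fin n → ℝ)) : Fin n → ℝ :=
  ((n : ℝ) + 1)⁻¹ • ∑ j, v j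

/-- The homothety of the simplex with vertices `v`, with center the centroid and ratio `σ`. -/
noncomputable def homSimplex {n : ℕ} (v : Fin (n + 1) → (Fin n → ℝ)) (σ : ℝ) : Set (Fin n → ℝ) :=
  (fun x => simplexCentroid v + σ • (x - simplexCentroid v)) '' simplexSet v

/-- `ξ(S) = min {σ ≥ 1 : Q_n ⊆ σS}`. -/
noncomputable def xiVal {n : ℕ} (v : Fin (n + 1) → (Fin n → ℝ)) : ℝ :=
  sInf {σ : ℝ | 1 ≤ σ ∧ unitCube n ⊆ homSimplex v σ}

/-- A function `ℝ^n → ℝ` is an affine polynomial of degree at most 1. -/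
def IsAffinePoly {n : ℕ} (f : (Fin n → ℝ) → ℝ) : Prop :=
  ∃ a : Fin n → ℝ, ∃ b : ℝ, ∀ x, f x = ∑ i, a i * x i + b

/-- `lam` is the family of basic Lagrange polynomials of the simplex with vertices `v`. -/
def IsLagrangeBasis {n : ℕ} (v : Fin (n + 1) → (Fin n → ℝ))
    (lam : Fin (n + 1) → (Fin n → ℝ) → ℝ) : Prop :=
  (∀ j, IsAffinePoly (lam j)) ∧ ∀ j k, lam j (v k) = if j = k then 1 else 0

/-- The `i`-th axial diameter of a set `S ⊆ ℝ^n`: the supremum of lengths of segments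
in `S` parallel to the `i`-th coordinate axis. -/
noncomputable def axialDiam {n : ℕ} (S : Set (Fin n → ℝ)) (i : Fin n) : ℝ :=
  sSup {t : ℝ | ∃ x ∈ S, ∃ y ∈ S, (∀ k, k ≠ i → x k = y k) ∧ y i - x i = t}

/-!
The Lagrange polynomials of `S` are its barycentric coordinates, so `S = {λ_k ≥ 0 ∀ k}`; as each
`λ_k` equals `1/(n+1)` at the centroid, `σS = {λ_k ≥ (1-σ)/(n+1) ∀ k}`. An affine function attains
its minimum over `Q_n` at a vertex, hence `Q_n ⊆ σS` iff `σ ≥ (n+1)M + 1`, where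
`M = max_k max_{v ∈ ver(Q_n)} (-λ_k(v))`. Finally `Q_n ⊄ S` forces `M > 0`, so the constraint
`σ ≥ 1` in the definition of `ξ` is inactive.
-/

namespace IsAffinePoly

variable {n : ℕ} {f : (Fin n → ℝ) → ℝ}

lemma exists_affineMap (hf : IsAffinePoly f) : ∃ g : (Fin n → ℝ) →ᵃ[ℝ] ℝ, ⇑g = f := by
  obtain ⟨a, b, hab⟩ := hf
  refine ⟨(∑ i, a i • LinearMap.proj i : (Fin n → ℝ) →ₗ[ℝ] ℝ).toAffineMap +
    AffineMap.const ℝ _ b, funext fun x => ?_⟩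
  simp [hab, Finset.sum_apply]

lemma apply_homothety (hf : IsAffinePoly f) (c x : Fin n → ℝ) (σ : ℝ) :
    f (c + σ • (x - c)) = σ * f x + (1 - σ) * f c := by
  obtain ⟨g, rfl⟩ := hf.exists_affineMap
  have := g.apply_lineMap c x σ
  simp only [AffineMap.lineMap_apply_module'] at this
  rw [add_comm, this, smul_eq_mul]
  ring

lemma exists_mem_cubeVerts_le (hf : IsAffinePoly f) {x : Fin n → ℝ} (hx : x ∈ unitCube n) :
    ∃ y ∈ cubeVerts n, f y ≤ f x := by
  obtain ⟨a, b, hab⟩ := hf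
  refine ⟨fun i => if a i < 0 then 1 else 0, fun i => by by_cases h : a i < 0 <;> simp [h], ?_⟩
  rw [hab, hab, add_le_add_iff_right]
  refine Finset.sum_le_sum fun i _ => ?_
  obtain ⟨h0, h1⟩ := hx i
  by_cases h : a i < 0 <;> simp only [h, if_true, if_false] <;> nlinarith

end IsAffinePoly

lemma cubeVerts_subset_unitCube (n : ℕ) : cubeVerts n ⊆ unitCube n := fun x hx i => by
  rcases hx i with h | h <;> simp [h]

lemma cubeVerts_finite (n : ℕ) : (cubeVerts n).Finite :=
  (Set.Finite.pi fun _ => (Set.finite_singleton (1 : ℝ)).insert 0).subset fun x hx i _ => by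
    rcases hx i with h | h <;> simp [h]

lemma bddAbove_neg_apply_cubeVerts {n m : ℕ} (lam : Fin m → (Fin n → ℝ) → ℝ) :
    BddAbove {r : ℝ | ∃ k, ∃ x ∈ cubeVerts n, r = -lam k x} := by
  refine (((Set.finite_univ.prod (cubeVerts_finite n)).image
    fun p : Fin m × (Fin n → ℝ) => -lam p.1 p.2).subset ?_).bddAbove
  rintro r ⟨k, x, hx, rfl⟩
  exact ⟨(k, x), ⟨trivial, hx⟩, rfl⟩

noncomputable def simplexBasis {n : ℕ} (v : Fin (n + 1) → (Fin n → ℝ))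
    (hv : AffineIndependent ℝ v) : AffineBasis (Fin (n + 1)) ℝ (Fin n → ℝ) :=
  ⟨v, hv, by simp [hv.affineSpan_eq_top_iff_card_eq_finrank_add_one]⟩

lemma simplexSet_eq_nonneg_coord {n : ℕ} (v : Fin (n + 1) → (Fin n → ℝ))
    (hv : AffineIndependent ℝ v) :
    simplexSet v = {x | ∀ k, 0 ≤ (simplexBasis v hv).coord k x} :=
  (simplexBasis v hv).convexHull_eq_nonneg_coord

lemma simplexCentroid_eq_centroid {n : ℕ} (v : Fin (n + 1) → (Fin n → ℝ)) :
    simplexCentroid v = Finset.univ.centroid ℝ v := by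
  rw [simplexCentroid, Finset.centroid, Finset.univ.affineCombination_eq_linear_combination _ _
    (Finset.univ.sum_centroidWeights_eq_one_of_nonempty ℝ Finset.univ_nonempty), Finset.smul_sum]
  simp [Finset.centroidWeights]

lemma mem_homSimplex_iff_mem_simplexSet {n : ℕ} (v : Fin (n + 1) → (Fin n → ℝ)) {σ : ℝ}
    (hσ : σ ≠ 0) (y : Fin n → ℝ) :
    y ∈ homSimplex v σ ↔
      simplexCentroid v + σ⁻¹ • (y - simplexCentroid v) ∈ simplexSet v := by
  constructor
  · rintro ⟨x, hx, rfl⟩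
    simpa [smul_smul, inv_mul_cancel₀ hσ] using hx
  · exact fun h => ⟨_, h, by simp [smul_smul, mul_inv_cancel₀ hσ]⟩

namespace IsLagrangeBasis

variable {n : ℕ} {v : Fin (n + 1) → (Fin n → ℝ)}
  {lam : Fin (n + 1) → (Fin n → ℝ) → ℝ}

lemma eq_coord (hlam : IsLagrangeBasis v lam) (hv : AffineIndependent ℝ v) (k : Fin (n + 1)) :
    lam k = (simplexBasis v hv).coord k := by
  obtain ⟨g, hg⟩ := (hlam.1 k).exists_affineMap
  rw [← hg]
  congr 1
  refine AffineMap.ext_on (simplexBasis v hv).tot ?_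
  rintro _ ⟨j, rfl⟩
  rw [hg, (simplexBasis v hv).coord_apply]
  exact hlam.2 k j

lemma mem_simplexSet_iff (hlam : IsLagrangeBasis v lam) (hv : AffineIndependent ℝ v)
    (x : Fin n → ℝ) : x ∈ simplexSet v ↔ ∀ k, 0 ≤ lam k x := by
  simp [simplexSet_eq_nonneg_coord v hv, hlam.eq_coord hv]

lemma apply_simplexCentroid (hlam : IsLagrangeBasis v lam) (hv : AffineIndependent ℝ v)
    (k : Fin (n + 1)) : lam k (simplexCentroid v) = ((n : ℝ) + 1)⁻¹ := by
  rw [hlam.eq_coord hv, simplexCentroid_eq_centroid]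
  exact ((simplexBasis v hv).coord_apply_centroid (Finset.mem_univ k)).trans (by simp)

lemma mem_homSimplex_iff (hlam : IsLagrangeBasis v lam) (hv : AffineIndependent ℝ v)
    {σ : ℝ} (hσ : 0 < σ) (y : Fin n → ℝ) :
    y ∈ homSimplex v σ ↔ ∀ k, (1 - σ) / ((n : ℝ) + 1) ≤ lam k y := by
  rw [mem_homSimplex_iff_mem_simplexSet v hσ.ne', hlam.mem_simplexSet_iff hv]
  refine forall_congr' fun k => ?_
  have hn : (n : ℝ) + 1 ≠ 0 := by positivity
  have hfactor : σ⁻¹ * lam k y + (1 - σ⁻¹) * ((n : ℝ) + 1)⁻¹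
      = σ⁻¹ * (lam k y - (1 - σ) / ((n : ℝ) + 1)) := by
    field_simp
    ring
  rw [(hlam.1 k).apply_homothety, hlam.apply_simplexCentroid hv, hfactor,
    mul_nonneg_iff_of_pos_left (inv_pos.2 hσ), sub_nonneg]

lemma unitCube_subset_homSimplex_iff (hlam : IsLagrangeBasis v lam) (hv : AffineIndependent ℝ v)
    {σ : ℝ} (hσ : 0 < σ) :
    unitCube n ⊆ homSimplex v σ ↔
      ∀ k, ∀ x ∈ cubeVerts n, (1 - σ) / ((n : ℝ) + 1) ≤ lam k x := by
  refine ⟨fun h k x hx => (hlam.mem_homSimplex_iff hv hσ x).1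
    (h (cubeVerts_subset_unitCube n hx)) k, fun h x hx => ?_⟩
  refine (hlam.mem_homSimplex_iff hv hσ x).2 fun k => ?_
  obtain ⟨y, hy, hyx⟩ := (hlam.1 k).exists_mem_cubeVerts_le hx
  exact (h k y hy).trans hyx

lemma unitCube_subset_homSimplex_iff_le_sSup (hlam : IsLagrangeBasis v lam)
    (hv : AffineIndependent ℝ v) {σ : ℝ} (hσ : 0 < σ) :
    unitCube n ⊆ homSimplex v σ ↔
      ((n : ℝ) + 1) * sSup {r : ℝ | ∃ k, ∃ x ∈ cubeVerts n, r = -lam k x} + 1 ≤ σ := by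
  have hn : (0 : ℝ) < n + 1 := by positivity
  have hne : {r : ℝ | ∃ k, ∃ x ∈ cubeVerts n, r = -lam k x}.Nonempty :=
    ⟨_, 0, 0, fun _ => Or.inl rfl, rfl⟩
  have hneg : ∀ k x,
      -lam k x ≤ (σ - 1) / ((n : ℝ) + 1) ↔ (1 - σ) / ((n : ℝ) + 1) ≤ lam k x := by
    intro k x
    rw [neg_le, ← neg_div, neg_sub]
  rw [hlam.unitCube_subset_homSimplex_iff hv hσ, ← le_sub_iff_add_le, mul_comm,
    ← le_div_iff₀ hn, csSup_le_iff (bddAbove_neg_apply_cubeVerts lam) hne]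
  exact ⟨fun h _ ⟨k, x, hx, hr⟩ => hr ▸ (hneg k x).2 (h k x hx),
    fun h k x hx => (hneg k x).1 (h _ ⟨k, x, hx, rfl⟩)⟩

lemma exists_neg_of_not_unitCube_subset (hlam : IsLagrangeBasis v lam)
    (hv : AffineIndependent ℝ v) (hns : ¬ unitCube n ⊆ simplexSet v) :
    ∃ k, ∃ x ∈ cubeVerts n, lam k x < 0 := by
  obtain ⟨x, hxQ, hxS⟩ := Set.not_subset.1 hns
  obtain ⟨k, hk⟩ := not_forall.1 (mt (hlam.mem_simplexSet_iff hv x).2 hxS)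
  obtain ⟨y, hy, hyx⟩ := (hlam.1 k).exists_mem_cubeVerts_le hxQ
  exact ⟨k, y, hy, hyx.trans_lt (not_le.1 hk)⟩

end IsLagrangeBasis

theorem xi_formula_general {n : ℕ} (v : Fin (n + 1) → (Fin n → ℝ))
    (hv : AffineIndependent ℝ v)
    (lam : Fin (n + 1) → (Fin n → ℝ) → ℝ) (hlam : IsLagrangeBasis v lam)
    (hns : ¬ unitCube n ⊆ simplexSet v) :
    xiVal v =
      ((n : ℝ) + 1) * sSup {r : ℝ | ∃ k, ∃ x ∈ cubeVerts n, r = -lam k x} + 1 := by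
  set M := sSup {r : ℝ | ∃ k, ∃ x ∈ cubeVerts n, r = -lam k x}
  obtain ⟨k₀, x₀, hx₀, hneg⟩ := hlam.exists_neg_of_not_unitCube_subset hv hns
  have hM : 0 < ((n : ℝ) + 1) * M := mul_pos (by positivity) <|
    (neg_pos.2 hneg).trans_le (le_csSup (bddAbove_neg_apply_cubeVerts lam) ⟨k₀, x₀, hx₀, rfl⟩)
  have hset : {σ : ℝ | 1 ≤ σ ∧ unitCube n ⊆ homSimplex v σ} = Set.Ici ((n + 1) * M + 1) := by
    ext σ
    constructor
    · rintro ⟨hσ, hsub⟩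
      exact (hlam.unitCube_subset_homSimplex_iff_le_sSup hv <| by linarith).1 hsub
    · intro (hσ : (n + 1) * M + 1 ≤ σ)
      have hσ_pos : 0 < σ := by linarith
      exact ⟨by linarith, (hlam.unitCube_subset_homSimplex_iff_le_sSup hv hσ_pos).2 hσ⟩
  rw [xiVal, hset, csInf_Ici]

/-- if `S ⊆ Q_n` and `Q_n ⊄ S`, then
`ξ(S) = (n+1)·max_{k} max_{v ∈ ver(Q_n)} (−λ_k(v)) + 1`. -/
theorem xi_formula {n : ℕ} (v : Fin (n + 1) → (Fin n → ℝ))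
    (hv : AffineIndependent ℝ v)
    (lam : Fin (n + 1) → (Fin n → ℝ) → ℝ) (hlam : IsLagrangeBasis v lam)
    (hS : simplexSet v ⊆ unitCube n) (hns : ¬ unitCube n ⊆ simplexSet v) :
    xiVal v =
      ((n : ℝ) + 1) * sSup {r : ℝ | ∃ k, ∃ x ∈ cubeVerts n, r = -lam k x} + 1 :=
  xi_formula_general v hv lam hlam hns
end

section
/- For the simplex S₁ ⊂ R³ with vertices (0,0,0), (1,1,0), (1,0,1), (0,1,1), one has ξ(S₁) = 3, all three axial diameters d_i(S₁) equal 1, and α(S₁) = 3. -/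
open Finset MeasureTheory

/-- The vertices of the simplex `S₁ ⊂ ℝ³`. -/
def S1verts : Fin 4 → (Fin 3 → ℝ) :=
  ![![0, 0, 0], ![1, 1, 0], ![1, 0, 1], ![0, 1, 1]]

/-!
The simplex `S₁` is cut out by `2 xᵢ ≤ x₀ + x₁ + x₂` (`i = 0, 1, 2`) and `x₀ + x₁ + x₂ ≤ 2`,
and its centroid is the centre `(1/2, 1/2, 1/2)` of the cube. Pulling a point `p` back from
`σ S₁` turns these into linear conditions on `p` with right-hand side `σ`, whose maxima over the
cube all equal `3` (attained at the corner `(0, 0, 1)`, for instance); hence `Q₃ ⊆ σ S₁` iff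
`σ ≥ 3`. The vertices of `S₁` are cube vertices, so `S₁ ⊆ Q₃` and no axial segment in `S₁` is
longer than `1`, while the axial unit segments through the centroid lie in `S₁`.
-/

lemma unitCube_eq_Icc (n : ℕ) : unitCube n = Set.Icc 0 1 := by
  ext x
  simp [unitCube, Pi.le_def, forall_and]

lemma convex_unitCube (n : ℕ) : Convex ℝ (unitCube n) := by
  rw [unitCube_eq_Icc]
  exact convex_Icc 0 1

lemma simplexSet_subset_unitCube {n : ℕ} {v : Fin (n + 1) → (Fin n → ℝ)}
    (hv : ∀ j, v j ∈ unitCube n) : simplexSet v ⊆ unitCube n :=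
  convexHull_min (Set.range_subset_iff.2 hv) (convex_unitCube n)

lemma axialDiam_eq_one {n : ℕ} {S : Set (Fin n → ℝ)} {i : Fin n} (hS : S ⊆ unitCube n)
    {x y : Fin n → ℝ} (hx : x ∈ S) (hy : y ∈ S) (hxy : ∀ k, k ≠ i → x k = y k)
    (hxi : x i = 0) (hyi : y i = 1) : axialDiam S i = 1 := by
  refine IsGreatest.csSup_eq ⟨⟨x, hx, y, hy, hxy, by rw [hxi, hyi, sub_zero]⟩, ?_⟩
  rintro t ⟨x', hx', y', hy', -, rfl⟩
  linarith [(hS hx' i).1, (hS hy' i).2]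

lemma mem_homSimplex_iff {n : ℕ} {v : Fin (n + 1) → (Fin n → ℝ)} {σ : ℝ} (hσ : σ ≠ 0)
    {p : Fin n → ℝ} :
    p ∈ homSimplex v σ ↔ simplexCentroid v + σ⁻¹ • (p - simplexCentroid v) ∈ simplexSet v := by
  constructor
  · rintro ⟨x, hx, rfl⟩
    rwa [add_sub_cancel_left, inv_smul_smul₀ hσ, add_sub_cancel]
  · intro h
    exact ⟨_, h, by simp only [add_sub_cancel_left, smul_inv_smul₀ hσ, add_sub_cancel]⟩

lemma xiVal_eq {n : ℕ} {v : Fin (n + 1) → (Fin n → ℝ)} {σ₀ : ℝ} (h₀ : 1 ≤ σ₀)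
    (h : ∀ σ, 1 ≤ σ → (unitCube n ⊆ homSimplex v σ ↔ σ₀ ≤ σ)) : xiVal v = σ₀ := by
  have hset : {σ : ℝ | 1 ≤ σ ∧ unitCube n ⊆ homSimplex v σ} = Set.Ici σ₀ := by
    ext σ
    exact ⟨fun ⟨h1, hσ⟩ => (h σ h1).1 hσ, fun hσ => ⟨h₀.trans hσ, (h σ (h₀.trans hσ)).2 hσ⟩⟩
  rw [xiVal, hset, csInf_Ici]

lemma S1verts_mem_unitCube (j : Fin 4) : S1verts j ∈ unitCube 3 := by
  intro i
  fin_cases j <;> fin_cases i <;> norm_num [S1verts]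

lemma simplexSet_S1verts :
    simplexSet S1verts = {x | (∀ i, 2 * x i ≤ ∑ j, x j) ∧ ∑ j, x j ≤ 2} := by
  apply Set.Subset.antisymm
  · refine convexHull_min ?_ ?_
    · rintro _ ⟨j, rfl⟩
      constructor
      · intro i
        fin_cases j <;> fin_cases i <;> norm_num [S1verts, Fin.sum_univ_three, Matrix.cons_val_two]
      · fin_cases j <;> norm_num [S1verts, Fin.sum_univ_three, Matrix.cons_val_two]
    · rintro x ⟨hx, hxs⟩ y ⟨hy, hys⟩ a b ha hb hab
      have hsum : ∑ j, (a • x + b • y) j = a * ∑ j, x j + b * ∑ j, y j := by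
        simp only [Pi.add_apply, Pi.smul_apply, smul_eq_mul, Finset.sum_add_distrib,
          Finset.mul_sum]
      refine ⟨fun i => ?_, ?_⟩ <;> rw [hsum]
      · simp only [Pi.add_apply, Pi.smul_apply, smul_eq_mul]
        nlinarith [mul_le_mul_of_nonneg_left (hx i) ha, mul_le_mul_of_nonneg_left (hy i) hb]
      · nlinarith [mul_le_mul_of_nonneg_left hxs ha, mul_le_mul_of_nonneg_left hys hb]
  · rintro x ⟨hx, hxs⟩
    -- the barycentric coordinates of `x`
    let w : Fin 4 → ℝ := ![1 - (∑ j, x j) / 2, (∑ j, x j - 2 * x 2) / 2,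
      (∑ j, x j - 2 * x 1) / 2, (∑ j, x j - 2 * x 0) / 2]
    have hw₀ : ∀ j ∈ Finset.univ, 0 ≤ w j := by
      intro j _
      fin_cases j <;> simp [w] <;> linarith [hx 0, hx 1, hx 2]
    have hw₁ : ∑ j, w j = 1 := by
      simp [w, Fin.sum_univ_four, Fin.sum_univ_three]
      ring
    have hxw : ∑ j, w j • S1verts j = x := by
      funext i
      fin_cases i <;> simp [w, S1verts, Fin.sum_univ_four, Fin.sum_univ_three] <;> ring
    rw [← hxw]
    exact (convex_convexHull ℝ _).sum_mem hw₀ hw₁ fun j _ => subset_convexHull ℝ _ ⟨j, rfl⟩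

lemma simplexCentroid_S1verts : simplexCentroid S1verts = fun _ => 1 / 2 := by
  funext i
  fin_cases i <;> simp [simplexCentroid, S1verts, Fin.sum_univ_four] <;> norm_num

lemma mem_homSimplex_S1verts_iff {σ : ℝ} (hσ : 0 < σ) (p : Fin 3 → ℝ) :
    p ∈ homSimplex S1verts σ ↔
      (∀ i, 4 * p i - 2 * ∑ j, p j + 1 ≤ σ) ∧ 2 * ∑ j, p j - 3 ≤ σ := by
  rw [mem_homSimplex_iff hσ.ne', simplexSet_S1verts, simplexCentroid_S1verts]
  simp only [Set.mem_ofPred_eq, Pi.add_apply, Pi.smul_apply, Pi.sub_apply, smul_eq_mul,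
    Fin.sum_univ_three]
  refine and_congr (forall_congr' fun i => ?_) ?_
  · rw [← mul_le_mul_iff_right₀ hσ]
    field_simp
    constructor <;> intro h <;> linarith
  · rw [← mul_le_mul_iff_right₀ hσ]
    field_simp
    constructor <;> intro h <;> linarith

lemma unitCube_subset_homSimplex_S1verts_iff {σ : ℝ} (hσ : 0 < σ) :
    unitCube 3 ⊆ homSimplex S1verts σ ↔ 3 ≤ σ := by
  constructor
  · intro h
    have hcorner : (![0, 0, 1] : Fin 3 → ℝ) ∈ unitCube 3 := by
      intro i
      fin_cases i <;> norm_num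
    have := ((mem_homSimplex_S1verts_iff hσ _).1 (h hcorner)).1 2
    norm_num [Fin.sum_univ_three, Matrix.cons_val_two] at this
    linarith
  · intro h3 p hp
    refine (mem_homSimplex_S1verts_iff hσ p).2 ⟨fun i => ?_, ?_⟩ <;>
      simp only [Fin.sum_univ_three]
    · fin_cases i <;> simp <;> linarith [hp 0, hp 1, hp 2]
    · linarith [hp 0, hp 1, hp 2]

lemma xiVal_S1verts : xiVal S1verts = 3 :=
  xiVal_eq (by norm_num) fun _ hσ => unitCube_subset_homSimplex_S1verts_iff (by linarith)

lemma axialDiam_S1verts (i : Fin 3) : axialDiam (simplexSet S1verts) i = 1 := by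
  have hsegment : ∀ a : ℝ, 0 ≤ a → a ≤ 1 →
      (fun k => if k = i then a else 1 / 2) ∈ simplexSet S1verts := by
    intro a ha₀ ha₁
    rw [simplexSet_S1verts]
    refine ⟨fun k => ?_, ?_⟩ <;> fin_cases i <;> try fin_cases k
    all_goals norm_num +decide [Fin.sum_univ_three]
    all_goals linarith
  exact axialDiam_eq_one (simplexSet_subset_unitCube S1verts_mem_unitCube)
    (hsegment 0 le_rfl zero_le_one) (hsegment 1 zero_le_one le_rfl)
    (fun k hk => by simp [hk]) (by simp) (by simp)

/-- `ξ(S₁) = 3`, all three axial diameters equal `1`, and `α(S₁) = 3`. -/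
theorem S1_props :
    xiVal S1verts = 3 ∧
    (∀ i, axialDiam (simplexSet S1verts) i = 1) ∧
    (∑ i, (axialDiam (simplexSet S1verts) i)⁻¹) = 3 := by
  refine ⟨xiVal_S1verts, axialDiam_S1verts, ?_⟩
  simp [axialDiam_S1verts]
end

section
/- ξ₅ = 5: there exists a nondegenerate simplex S ⊆ [0,1]⁵ with [0,1]⁵ ⊆ 5S, and for every nondegenerate simplex T ⊆ [0,1]⁵ the minimal σ ≥ 1 with [0,1]⁵ ⊆ σT is at least 5. -/
open Finset MeasureTheory

lemma isLeast_sum_mul_add_unitCube {n : ℕ} (a : Fin n → ℝ) (c : ℝ) :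
    IsLeast ((fun x => ∑ i, a i * x i + c) '' unitCube n) (∑ i, min (a i) 0 + c) := by
  constructor
  · refine ⟨fun i => if a i < 0 then 1 else 0, fun i => by dsimp only; split_ifs <;> norm_num, ?_⟩
    refine congrArg (· + c) (Finset.sum_congr rfl fun i _ => ?_)
    dsimp only
    split_ifs with h
    · simp [min_eq_left h.le]
    · simp [min_eq_right (not_lt.mp h)]
  · rintro _ ⟨x, hx, rfl⟩
    refine add_le_add_left (Finset.sum_le_sum fun i _ => ?_) c
    obtain ⟨h0, h1⟩ := hx i
    rcases le_total 0 (a i) with ha | ha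
    · rw [min_eq_right ha]; positivity
    · rw [min_eq_left ha]; nlinarith

namespace AffineBasis

variable {ι k V : Type*} [Ring k] [AddCommGroup V] [Module k V]
  (b : AffineBasis ι k V)

lemma coord_apply_eq_linear_add (i : ι) (v : V) :
    b.coord i v = (b.coord i).linear v + b.coord i 0 := by
  simpa using (b.coord i).map_vadd 0 v

variable [Fintype ι]

lemma sum_coord_linear_eq_zero (v : V) : ∑ i, (b.coord i).linear v = 0 := by
  have h := b.sum_coord_apply_eq_one v
  simp only [b.coord_apply_eq_linear_add _ v, Finset.sum_add_distrib,
    b.sum_coord_apply_eq_one 0] at h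
  simpa using h

lemma linear_combination_coord_linear_eq_self (v : V) :
    ∑ i, (b.coord i).linear v • b i = v := by
  have h := b.linear_combination_coord_eq_self v
  simp only [b.coord_apply_eq_linear_add _ v, add_smul, Finset.sum_add_distrib,
    b.linear_combination_coord_eq_self 0] at h
  simpa using h

end AffineBasis

section Simplex

variable {n : ℕ} (b : AffineBasis (Fin (n + 1)) ℝ (Fin n → ℝ))

lemma coord_simplexCentroid (j : Fin (n + 1)) :
    b.coord j (simplexCentroid b) = ((n : ℝ) + 1)⁻¹ := by
  have hw : ∑ _k : Fin (n + 1), ((n : ℝ) + 1)⁻¹ = 1 := by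
    rw [Finset.sum_const, Finset.card_univ, Fintype.card_fin, nsmul_eq_mul]
    push_cast
    field_simp
  have hc :
      simplexCentroid b = Finset.univ.affineCombination ℝ b fun _ => ((n : ℝ) + 1)⁻¹ := by
    rw [Finset.affineCombination_eq_linear_combination _ _ _ hw, simplexCentroid, Finset.smul_sum]
  rw [hc]
  exact b.coord_apply_combination_of_mem (Finset.mem_univ j) hw

lemma coord_homothety_simplexCentroid (j : Fin (n + 1)) (σ : ℝ) (z : Fin n → ℝ) :
    b.coord j (simplexCentroid b + σ • (z - simplexCentroid b)) =
      ((n : ℝ) + 1)⁻¹ + σ * (b.coord j z - ((n : ℝ) + 1)⁻¹) := by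
  rw [add_comm (simplexCentroid b), ← AffineMap.lineMap_apply_module', AffineMap.apply_lineMap,
    AffineMap.lineMap_apply_ring', coord_simplexCentroid]
  ring

lemma mem_homSimplex_iff_s14 {σ : ℝ} (hσ : 0 < σ) (x : Fin n → ℝ) :
    x ∈ homSimplex b σ ↔ ∀ j, (1 - σ) / (n + 1) ≤ b.coord j x := by
  have hn : (0 : ℝ) < n + 1 := by positivity
  simp only [homSimplex, simplexSet, b.convexHull_eq_nonneg_coord, Set.mem_image,
    Set.mem_ofPred_eq]
  constructor
  · rintro ⟨z, hz, rfl⟩ j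
    rw [coord_homothety_simplexCentroid, div_le_iff₀ hn]
    have hzj := hz j
    field_simp
    nlinarith [mul_nonneg hσ.le (mul_nonneg hn.le hzj)]
  · intro h
    refine ⟨simplexCentroid b + σ⁻¹ • (x - simplexCentroid b), fun j => ?_, ?_⟩
    · rw [coord_homothety_simplexCentroid]
      have hxj := h j
      rw [div_le_iff₀ hn] at hxj
      field_simp
      nlinarith
    · rw [add_sub_cancel_left, smul_smul, mul_inv_cancel₀ hσ.ne', one_smul, add_sub_cancel]

end Simplex

section LowerBound

variable {n : ℕ} (b : AffineBasis (Fin (n + 1)) ℝ (Fin n → ℝ))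

lemma coord_eq_sum_mul_add (j : Fin (n + 1)) (x : Fin n → ℝ) :
    b.coord j x = ∑ i, (b.coord j).linear (Pi.single i 1) * x i + b.coord j 0 := by
  rw [b.coord_apply_eq_linear_add]
  conv_lhs => rw [pi_eq_sum_univ' x, map_sum]
  simp only [map_smul, smul_eq_mul, mul_comm]

lemma isLeast_coord_image_unitCube (j : Fin (n + 1)) :
    IsLeast (b.coord j '' unitCube n)
      (∑ i, min ((b.coord j).linear (Pi.single i 1)) 0 + b.coord j 0) := by
  have h :=
    isLeast_sum_mul_add_unitCube (fun i => (b.coord j).linear (Pi.single i 1)) (b.coord j 0)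
  rwa [← funext (coord_eq_sum_mul_add b j)] at h

lemma sum_min_coord_linear_single_le_neg_one (hb : Set.range b ⊆ unitCube n) (i : Fin n) :
    ∑ j, min ((b.coord j).linear (Pi.single i 1)) 0 ≤ -1 := by
  set l : Fin (n + 1) → ℝ := fun j => (b.coord j).linear (Pi.single i 1)
  have hsum : ∑ j, l j = 0 := b.sum_coord_linear_eq_zero _
  have hcomb : ∑ j, l j * b j i = 1 := by
    have h := congrFun (b.linear_combination_coord_linear_eq_self (Pi.single i 1)) i
    simpa only [Finset.sum_apply, Pi.smul_apply, smul_eq_mul, Pi.single_eq_same] using h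
  have hverts : (fun j => b j i) ∈ unitCube (n + 1) := fun j => hb ⟨j, rfl⟩ i
  have hmin := (isLeast_sum_mul_add_unitCube (fun j => -l j) 0).2 ⟨_, hverts, rfl⟩
  calc ∑ j, min (l j) 0 = ∑ j, l j + ∑ j, min (-l j) 0 := by
        rw [← Finset.sum_add_distrib]
        refine Finset.sum_congr rfl fun j _ => ?_
        rcases le_total 0 (l j) with h | h
        · rw [min_eq_right h, min_eq_left (neg_nonpos.mpr h)]; ring
        · rw [min_eq_left h, min_eq_right (neg_nonneg.mpr h)]; ring
    _ ≤ -1 := by simp only [Finset.sum_neg_distrib, neg_mul] at hmin; linarith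

lemma natCast_le_of_unitCube_subset_homSimplex (hb : Set.range b ⊆ unitCube n) {σ : ℝ}
    (hσ : 0 < σ) (hQ : unitCube n ⊆ homSimplex b σ) : (n : ℝ) ≤ σ := by
  have hvertex (j : Fin (n + 1)) :
      (1 - σ) / (n + 1) ≤ ∑ i, min ((b.coord j).linear (Pi.single i 1)) 0 + b.coord j 0 := by
    obtain ⟨z, hz, hzmin⟩ := (isLeast_coord_image_unitCube b j).1
    exact hzmin ▸ (mem_homSimplex_iff_s14 b hσ z).1 (hQ hz) j
  have hsum := Finset.sum_le_sum (s := Finset.univ) fun j _ => hvertex j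
  have haxial := Finset.sum_le_sum (s := Finset.univ) fun i _ =>
    sum_min_coord_linear_single_le_neg_one b hb i
  rw [Finset.sum_add_distrib, b.sum_coord_apply_eq_one 0, Finset.sum_comm] at hsum
  simp only [Finset.sum_const, Finset.card_univ, Fintype.card_fin, nsmul_eq_mul, Nat.cast_add,
    Nat.cast_one] at hsum haxial
  rw [mul_div_cancel₀ _ (by positivity)] at hsum
  linarith

lemma exists_unitCube_subset_homSimplex : ∃ σ, 1 ≤ σ ∧ unitCube n ⊆ homSimplex b σ := by
  set m : Fin (n + 1) → ℝ :=
    fun j => ∑ i, min ((b.coord j).linear (Pi.single i 1)) 0 + b.coord j 0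
  set M := ∑ j, |m j|
  have hM : 0 ≤ M := by positivity
  refine ⟨1 + (n + 1) * M, by nlinarith, fun x hx => ?_⟩
  refine (mem_homSimplex_iff_s14 b (by positivity) x).2 fun j => ?_
  calc (1 - (1 + (n + 1) * M)) / (n + 1) = -M := by field_simp; ring
    _ ≤ -|m j| :=
        neg_le_neg (Finset.single_le_sum (fun k _ => abs_nonneg (m k)) (Finset.mem_univ j))
    _ ≤ m j := neg_abs_le _
    _ ≤ b.coord j x := (isLeast_coord_image_unitCube b j).2 ⟨x, hx, rfl⟩

end LowerBound

def affineBasisOfIndependent {n : ℕ} {w : Fin (n + 1) → Fin n → ℝ}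
    (hw : AffineIndependent ℝ w) : AffineBasis (Fin (n + 1)) ℝ (Fin n → ℝ) :=
  ⟨w, hw, by rw [hw.affineSpan_eq_top_iff_card_eq_finrank_add_one]; simp⟩

theorem natCast_le_xiVal {n : ℕ} {w : Fin (n + 1) → Fin n → ℝ} (hw : AffineIndependent ℝ w)
    (hS : simplexSet w ⊆ unitCube n) : (n : ℝ) ≤ xiVal w := by
  let b := affineBasisOfIndependent hw
  have hb : Set.range b ⊆ unitCube n := (subset_convexHull ℝ _).trans hS
  obtain ⟨σ₀, hσ₀, hQ₀⟩ := exists_unitCube_subset_homSimplex b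
  exact le_csInf ⟨σ₀, hσ₀, hQ₀⟩ fun σ ⟨hσ, hQ⟩ =>
    natCast_le_of_unitCube_subset_homSimplex b hb (by linarith) hQ

lemma IsAffinePoly.apply_sum_smul {n : ℕ} {ι : Type*} [Fintype ι] {f : (Fin n → ℝ) → ℝ}
    (hf : IsAffinePoly f) (c : ι → ℝ) (p : ι → Fin n → ℝ) :
    f (∑ k, c k • p k) = ∑ k, c k * f (p k) + (1 - ∑ k, c k) * f 0 := by
  obtain ⟨a, d, hfa⟩ := hf
  have hdot : ∀ x, f x = a ⬝ᵥ x + d := hfa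
  simp only [hdot, dotProduct_sum, dotProduct_smul, smul_eq_mul, dotProduct_zero, mul_add,
    Finset.sum_add_distrib, ← Finset.sum_mul]
  ring

namespace IsLagrangeBasis

variable {n : ℕ} {v : Fin (n + 1) → Fin n → ℝ} {lam : Fin (n + 1) → (Fin n → ℝ) → ℝ}

lemma affineIndependent (h : IsLagrangeBasis v lam) : AffineIndependent ℝ v := by
  rw [affineIndependent_iff_of_fintype]
  intro c hc hcomb j
  rw [Finset.weightedVSub_eq_linear_combination _ hc] at hcomb
  have hj := (h.1 j).apply_sum_smul c v
  simp only [hcomb, h.2, hc, mul_ite, mul_one, mul_zero, Finset.sum_ite_eq,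
    Finset.mem_univ, if_true] at hj
  linarith

lemma coord_eq (h : IsLagrangeBasis v lam) (b : AffineBasis (Fin (n + 1)) ℝ (Fin n → ℝ))
    (hb : ⇑b = v) (j : Fin (n + 1)) (x : Fin n → ℝ) : b.coord j x = lam j x := by
  subst hb
  have hj := (h.1 j).apply_sum_smul (fun k => b.coord k x) b
  simp only [b.linear_combination_coord_eq_self, b.sum_coord_apply_eq_one, h.2, mul_ite,
    mul_one, mul_zero, Finset.sum_ite_eq, Finset.mem_univ, if_true, sub_self, zero_mul,
    add_zero] at hj
  exact hj.symm

lemma unitCube_subset_homSimplex (h : IsLagrangeBasis v lam) {σ : ℝ} (hσ : 0 < σ)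
    (hlam : ∀ j, ∀ x ∈ unitCube n, (1 - σ) / (n + 1) ≤ lam j x) :
    unitCube n ⊆ homSimplex v σ := fun x hx =>
  (mem_homSimplex_iff_s14 (affineBasisOfIndependent h.affineIndependent) hσ x).2 fun j =>
    (h.coord_eq (affineBasisOfIndependent h.affineIndependent) rfl j x).symm ▸ hlam j x hx

end IsLagrangeBasis

noncomputable def xi5Simplex : Fin 6 → Fin 5 → ℝ :=
  ![![0, 0, 1/2, 0, 2/3],
    ![1, 0, 0, 1, 0],
    ![0, 1/2, 1, 1, 2/3],
    ![1, 1, 1, 0, 0],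
    ![1, 1/2, 1/2, 1/2, 1],
    ![0, 1, 0, 1/2, 2/3]]

noncomputable def xi5LagrangeCoeff : Fin 6 → Fin 5 → ℝ :=
  ![![-1/3, -2/3, 0, -2/3, 0],
    ![1/6, -1/3, -1/3, 1/3, -1/2],
    ![-1/3, 0, 2/3, 2/3, 0],
    ![1/6, 1/3, 1/3, -1/3, -1/2],
    ![2/3, 0, 0, 0, 1],
    ![-1/3, 2/3, -2/3, 0, 0]]

noncomputable def xi5LagrangeConst : Fin 6 → ℝ := ![1, 1/2, -1/3, 1/6, -2/3, 1/3]

noncomputable def xi5Lagrange (j : Fin 6) (x : Fin 5 → ℝ) : ℝ :=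
  ∑ i, xi5LagrangeCoeff j i * x i + xi5LagrangeConst j

lemma isLagrangeBasis_xi5 : IsLagrangeBasis xi5Simplex xi5Lagrange := by
  refine ⟨fun j => ⟨xi5LagrangeCoeff j, xi5LagrangeConst j, fun x => rfl⟩, fun j k => ?_⟩
  fin_cases j <;> fin_cases k <;>
    norm_num [xi5Lagrange, xi5Simplex, xi5LagrangeCoeff, xi5LagrangeConst, Fin.sum_univ_succ]

lemma range_xi5Simplex_subset : Set.range xi5Simplex ⊆ unitCube 5 := by
  rintro _ ⟨j, rfl⟩ i
  fin_cases j <;> fin_cases i <;> norm_num [xi5Simplex, Matrix.cons_val]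

lemma neg_two_thirds_le_xi5Lagrange (j : Fin 6) (x : Fin 5 → ℝ) (hx : x ∈ unitCube 5) :
    -(2 / 3) ≤ xi5Lagrange j x := by
  have hmin : -(2 / 3) ≤ ∑ i, min (xi5LagrangeCoeff j i) 0 + xi5LagrangeConst j := by
    fin_cases j <;> norm_num [xi5LagrangeCoeff, xi5LagrangeConst, Fin.sum_univ_succ]
  exact hmin.trans ((isLeast_sum_mul_add_unitCube _ _).2 ⟨x, hx, rfl⟩)

/-- `ξ₅ = 5`: there is a nondegenerate simplex `S ⊆ [0,1]⁵` with
`[0,1]⁵ ⊆ 5S`, and every nondegenerate simplex `T ⊆ [0,1]⁵` has `ξ(T) ≥ 5`. -/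
theorem xi_5_eq_5 :
    (∃ v : Fin 6 → (Fin 5 → ℝ), AffineIndependent ℝ v ∧
      simplexSet v ⊆ unitCube 5 ∧ unitCube 5 ⊆ homSimplex v 5) ∧
    (∀ w : Fin 6 → (Fin 5 → ℝ), AffineIndependent ℝ w →
      simplexSet w ⊆ unitCube 5 → (5 : ℝ) ≤ xiVal w) := by
  refine ⟨⟨xi5Simplex, isLagrangeBasis_xi5.affineIndependent,
    convexHull_min range_xi5Simplex_subset (convex_unitCube 5), ?_⟩,
    fun w hw hS => by exact_mod_cast natCast_le_xiVal hw hS⟩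
  refine isLagrangeBasis_xi5.unitCube_subset_homSimplex (by norm_num) fun j x hx => ?_
  exact (show (1 - 5 : ℝ) / ((5 : ℕ) + 1) = -(2 / 3) by norm_num).trans_le
    (neg_two_thirds_le_xi5Lagrange j x hx)
end
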